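/- Let G be a discrete group and N ⊴ G, and let A be a G-graded *-algebra. Define Θ on generators of A⋊G⋊G⋊(G/N) by Θ(a_s, t, r, gN) = (a_s, t r g N) ⊗ (λ_s M_{χ_t} ρ_r), with values in (A⋊(G/N)) ⊗ End(c_c(G)). Then Θ is multiplicative and *-preserving on generators: for generators x = (a_s, t, r, gN) and y = (b_{s'}, t', r', g'N), Θ(x y) = Θ(x) Θ(y) and Θ(x*) = Θ(x)*, where the operations on A⋊G⋊G⋊(G/N) are the iterated crossed-product operations, the operations on the target are componentwise, and the adjoint on End(c_c(G)) is with respect to the standard inner product. -/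

import Mathlib

/-!
Statement 17 (the isomorphism `Θ` in the proof of Theorem 6.1 of
Kaliszewski–Quigg): for a discrete group `G`, `N ⊴ G`, and a `G`-graded
*-algebra `A`, the map `Θ` defined on generators of `A ⋊ G ⋊ G ⋊ (G/N)` by
`Θ(a_s, t, r, gN) = (a_s, t r gN) ⊗ (λ_s M_{χ_t} ρ_r)`, with values in
`(A ⋊ (G/N)) ⊗ End(c_c(G))`, is multiplicative and *-preserving.

The operator `λ_s M_{χ_t} ρ_r` on `c_c(G) = (G →₀ ℂ)` is the partial
translation `ξ ↦ (ξ (t r)) χ_{s t}`, i.e. the matrix unit `E_{s t, t r}`;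
accordingly `(A ⋊ (G/N)) ⊗ End(c_c(G))` (finite-rank part) is modelled as
`((G × G ⧸ N) × G × G) →₀ A`, an elementary tensor `(a_s, cN) ⊗ E_{x,y}`
being `Finsupp.single ((s, cN), x, y) a`, with componentwise multiplication
(`E_{x,y} E_{x',y'} = [y = x'] E_{x,y'}`) and involution
(`E_{x,y}* = E_{y,x}`, the adjoint for the standard inner product).
-/

attribute [local instance] Classical.propDecidable

noncomputable section

variable {G : Type*} [Group G] {A : Type*} [Ring A] [Algebra ℂ A] [StarRing A]
  [StarModule ℂ A] {N : Subgroup G} [N.Normal]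

/-- `A` is a `G`-graded *-algebra with grading subspaces `𝒜 s`. -/
structure IsStarGrading (𝒜 : G → Submodule ℂ A) : Prop where
  one_mem : (1 : A) ∈ 𝒜 1
  mul_mem : ∀ ⦃s t : G⦄ ⦃a b : A⦄, a ∈ 𝒜 s → b ∈ 𝒜 t → a * b ∈ 𝒜 (s * t)
  star_mem : ∀ ⦃s : G⦄ ⦃a : A⦄, a ∈ 𝒜 s → star a ∈ 𝒜 s⁻¹
  indep : iSupIndep 𝒜
  span_top : ⨆ s, 𝒜 s = ⊤

/-- Left regular representation: `(λ_s ξ)(x) = ξ (s⁻¹ x)`. -/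
def lam (s : G) (ξ : G →₀ ℂ) : G →₀ ℂ :=
  Finsupp.equivMapDomain (Equiv.mulLeft s) ξ

/-- Right regular representation: `(ρ_r ξ)(x) = ξ (x r)`. -/
def rho (r : G) (ξ : G →₀ ℂ) : G →₀ ℂ :=
  Finsupp.equivMapDomain (Equiv.mulRight r⁻¹) ξ

/-- Multiplication by the indicator function `χ_t` of the singleton `{t}`. -/
def mulChi (t : G) (ξ : G →₀ ℂ) : G →₀ ℂ :=
  Finsupp.single t (ξ t)

/-- The operator `λ_s ∘ M_{χ_t} ∘ ρ_r` on `G →₀ ℂ`. -/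
def T (s t r : G) : (G →₀ ℂ) → (G →₀ ℂ) :=
  lam s ∘ mulChi t ∘ rho r

/-- Multiplication on `A ⋊ G ⋊ G ⋊ (G/N)` (generators `(a_s, t, r, gN)` at
index `(s, t, r, gN)`):
`(a,s,t,r,gN)(b,s',t',r',g'N) = (a b, s s', t' r⁻¹, r r', g'N)` if
`t = s' t' r⁻¹` and `gN = r' g'N`, else `0`. -/
def c4Mul (f g : (G × G × G × G ⧸ N) →₀ A) : (G × G × G × G ⧸ N) →₀ A :=
  f.sum fun p a => g.sum fun q b =>
    if p.2.1 = q.1 * q.2.1 * p.2.2.1⁻¹ ∧ p.2.2.2 = (q.2.2.1 : G ⧸ N) * q.2.2.2 then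
      Finsupp.single (p.1 * q.1, q.2.1 * p.2.2.1⁻¹, p.2.2.1 * q.2.2.1, q.2.2.2) (a * b)
    else 0

/-- Involution on `A ⋊ G ⋊ G ⋊ (G/N)`:
`(a,s,t,r,gN)* = (a*, s⁻¹, s t r, r⁻¹, r·gN)`. -/
def c4Star (f : (G × G × G × G ⧸ N) →₀ A) : (G × G × G × G ⧸ N) →₀ A :=
  f.sum fun p a =>
    Finsupp.single (p.1⁻¹, p.1 * p.2.1 * p.2.2.1, p.2.2.1⁻¹,
      (p.2.2.1 : G ⧸ N) * p.2.2.2) (star a)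

/-- Multiplication on `(A ⋊ (G/N)) ⊗ End(c_c(G))`:
`((a,cN) ⊗ E_{x,y})((b,c'N) ⊗ E_{x',y'}) = ((a b, c'N) ⊗ E_{x,y'})` if
`y = x'` and `cN = (deg b)·c'N`, else `0`. -/
def ttMul (f g : ((G × G ⧸ N) × G × G) →₀ A) : ((G × G ⧸ N) × G × G) →₀ A :=
  f.sum fun p a => g.sum fun q b =>
    if p.2.2 = q.2.1 ∧ p.1.2 = (q.1.1 : G ⧸ N) * q.1.2 then
      Finsupp.single ((p.1.1 * q.1.1, q.1.2), p.2.1, q.2.2) (a * b)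
    else 0

/-- Involution on `(A ⋊ (G/N)) ⊗ End(c_c(G))`:
`((a,cN) ⊗ E_{x,y})* = (a*, (deg a)·cN) ⊗ E_{y,x}`. -/
def ttStar (f : ((G × G ⧸ N) × G × G) →₀ A) : ((G × G ⧸ N) × G × G) →₀ A :=
  f.sum fun p a =>
    Finsupp.single ((p.1.1⁻¹, (p.1.1 : G ⧸ N) * p.1.2), p.2.2, p.2.1) (star a)

/-- `Θ(a_s, t, r, gN) = (a_s, t r gN) ⊗ (λ_s M_{χ_t} ρ_r)`, with
`λ_s M_{χ_t} ρ_r = E_{s t, t r}`, extended linearly. -/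
def Theta17 (f : (G × G × G × G ⧸ N) →₀ A) : ((G × G ⧸ N) × G × G) →₀ A :=
  f.sum fun p a =>
    Finsupp.single
      ((p.1, ((p.2.1 * p.2.2.1 : G) : G ⧸ N) * p.2.2.2),
        p.1 * p.2.1, p.2.1 * p.2.2.1) a

/-!
`Θ` is `Finsupp.mapDomain` along the index map `thetaIndex`, and both multiplications are
convolutions along partial products of indices. So it suffices that `thetaIndex` is a functor
of these "index groupoids": a pair of generators is composable exactly when its image is
(`tr = s't'` forces `t = s't'r⁻¹`, and then `t r gN = s' t' r' g'N` cancels to `gN = r' g'N`),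
it carries products to products, and it intertwines the two involutions on indices.
-/

namespace Finsupp

variable {α β : Type*}

def partialConv {R : Type*} [NonUnitalNonAssocSemiring R] (C : α → α → Prop) [DecidableRel C]
    (m : α → α → α) (f g : α →₀ R) : α →₀ R :=
  f.sum fun p a => g.sum fun q b => if C p q then single (m p q) (a * b) else 0

theorem mapDomain_partialConv {R : Type*} [NonUnitalNonAssocSemiring R]
    {C₁ : α → α → Prop} [DecidableRel C₁] {m₁ : α → α → α}
    {C₂ : β → β → Prop} [DecidableRel C₂] {m₂ : β → β → β} (θ : α → β)
    (hC : ∀ p q, C₂ (θ p) (θ q) ↔ C₁ p q)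
    (hm : ∀ p q, C₁ p q → θ (m₁ p q) = m₂ (θ p) (θ q)) (f g : α →₀ R) :
    mapDomain θ (partialConv C₁ m₁ f g) =
      partialConv C₂ m₂ (mapDomain θ f) (mapDomain θ g) := by
  unfold partialConv
  rw [sum_mapDomain_index (fun _ => by simp only [zero_mul, single_zero, ite_self, sum_fun_zero])
    (fun _ _ _ => by
      rw [← sum_add]
      exact sum_congr fun _ _ => by split_ifs <;> simp only [add_mul, single_add, add_zero])]
  simp only [mapDomain_sum]
  refine sum_congr fun p _ => ?_
  rw [sum_mapDomain_index (fun _ => by simp only [mul_zero, single_zero, ite_self])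
    (fun _ _ _ => by split_ifs <;> simp only [mul_add, single_add, add_zero])]
  refine sum_congr fun q _ => ?_
  by_cases h : C₁ p q
  · rw [if_pos h, if_pos ((hC p q).mpr h), mapDomain_single, hm p q h]
  · rw [if_neg h, if_neg (mt (hC p q).mp h), mapDomain_zero]

theorem mapDomain_sum_single_map {M M' : Type*} [AddCommMonoid M] [AddCommMonoid M']
    {σ₁ : α → α} {σ₂ : β → β} (θ : α → β) (hσ : ∀ p, θ (σ₁ p) = σ₂ (θ p)) (φ : M →+ M')
    (f : α →₀ M) :
    mapDomain θ (f.sum fun p a => single (σ₁ p) (φ a)) =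
      (mapDomain θ f).sum fun p a => single (σ₂ p) (φ a) := by
  rw [mapDomain_sum, sum_mapDomain_index (by simp) (by simp [single_add])]
  simp only [mapDomain_single, hσ]

end Finsupp

theorem T_apply (s t r : G) (ξ : G →₀ ℂ) : T s t r ξ = Finsupp.single (s * t) (ξ (t * r)) := by
  simp [T, lam, mulChi, rho, Finsupp.equivMapDomain_single, Finsupp.equivMapDomain_apply]

def thetaIndex (p : G × G × G × G ⧸ N) : (G × G ⧸ N) × G × G :=
  ((p.1, ((p.2.1 * p.2.2.1 : G) : G ⧸ N) * p.2.2.2), p.1 * p.2.1, p.2.1 * p.2.2.1)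

theorem thetaIndex_composable_iff (t r s' t' r' : G) (gN g'N : G ⧸ N) :
    (t * r = s' * t' ∧
        ((t * r : G) : G ⧸ N) * gN = (s' : G ⧸ N) * (((t' * r' : G) : G ⧸ N) * g'N)) ↔
      (t = s' * t' * r⁻¹ ∧ gN = (r' : G ⧸ N) * g'N) := by
  rw [← eq_mul_inv_iff_mul_eq]
  refine and_congr_right fun ht => ?_
  subst ht
  simp only [QuotientGroup.mk_mul, QuotientGroup.mk_inv, mul_assoc, inv_mul_cancel_left,
    mul_right_inj]

theorem thetaIndex_mul (s t r s' t' r' : G) (g'N : G ⧸ N) (ht : t = s' * t' * r⁻¹) :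
    thetaIndex (s * s', t' * r⁻¹, r * r', g'N) =
      ((s * s', ((t' * r' : G) : G ⧸ N) * g'N), s * t, t' * r') := by
  subst ht
  simp only [thetaIndex, mul_assoc, inv_mul_cancel_left]

theorem thetaIndex_star (s t r : G) (gN : G ⧸ N) :
    thetaIndex (s⁻¹, s * t * r, r⁻¹, (r : G ⧸ N) * gN) =
      ((s⁻¹, (s : G ⧸ N) * (((t * r : G) : G ⧸ N) * gN)), t * r, s * t) := by
  simp only [thetaIndex, QuotientGroup.mk_mul, mul_assoc, mul_inv_cancel, mul_one,
    inv_mul_cancel_left]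

theorem theta_is_multiplicative_and_star_preserving
    (𝒜 : G → Submodule ℂ A) :
    -- the operator `λ_s M_{χ_t} ρ_r` is the matrix unit `E_{s t, t r}`
    (∀ (s t r : G) (ξ : G →₀ ℂ),
      T s t r ξ = Finsupp.single (s * t) (ξ (t * r))) ∧
    -- `Θ` is the stated map on generators
    (∀ (s t r : G) (gN : G ⧸ N) (a : A), a ∈ 𝒜 s →
      Theta17 (Finsupp.single (s, t, r, gN) a) =
        Finsupp.single ((s, ((t * r : G) : G ⧸ N) * gN), s * t, t * r) a) ∧
    -- `Θ` is multiplicative and *-preserving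
    (∀ f g : (G × G × G × G ⧸ N) →₀ A,
      Theta17 (c4Mul f g) = ttMul (Theta17 f) (Theta17 g)) ∧
    (∀ f : (G × G × G × G ⧸ N) →₀ A,
      Theta17 (c4Star f) = ttStar (Theta17 f)) := by
  refine ⟨T_apply, fun _ _ _ _ _ _ => Finsupp.mapDomain_single, fun f g => ?_, fun f => ?_⟩
  · exact Finsupp.mapDomain_partialConv thetaIndex
      (fun _ _ => thetaIndex_composable_iff _ _ _ _ _ _ _)
      (fun _ _ h => thetaIndex_mul _ _ _ _ _ _ _ h.1) f g
  · refine Finsupp.mapDomain_sum_single_map thetaIndex ?_ starAddEquiv.toAddMonoidHom f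
    exact fun _ => thetaIndex_star _ _ _ _

end
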